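/- For every probability measures Z00, Z10, Z01, Z11 on a measurable space Ω and every measurable classifier g : Ω → ℝ taking values in {0,1}, there exists a measurable adversary h : Ω × {0,1} → ℝ taking values in {0,1} (constructed piecewise from g and 1 − g according to the second argument) such that L_EO(h) = Δ_EO(g). Consequently, the supremum of L_EO(h) over all measurable {0,1}-valued adversaries h is at least Δ_EO(g): the equalized odds distance of any classifier learnable from the representation is bounded above by the optimal adversarial objective value. -/

import Mathlib

/-!
Replacing the adversary's guess `u` by `1 - u` on a pair of groups `(μ, ν)` flips the sign of
`∫ (1 - u) ∂μ + ∫ u ∂ν - 1 = ∫ u ∂ν - ∫ u ∂μ`, so taking `u = g` or `u = 1 - g`, whichever makes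
it nonnegative, realizes `|∫ g ∂μ - ∫ g ∂ν|`. Doing this for `Y = 0` and `Y = 1` separately gives
an adversary whose objective is `Δ_EO(g)`; the objective of any `{0,1}`-valued adversary is at
most `2`, so the supremum is finite and dominates `Δ_EO(g)`.
-/

open MeasureTheory

section

variable {Ω : Type*} [MeasurableSpace Ω]

noncomputable def eoObjective (Z00 Z10 Z01 Z11 : Measure Ω) (h : Ω → Bool → ℝ) : ℝ :=
  (∫ x, (1 - h x false) ∂Z00) + (∫ x, h x false ∂Z10) +
    (∫ x, (1 - h x true) ∂Z01) + (∫ x, h x true ∂Z11) - 2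

lemma integrable_of_forall_eq_zero_or_one {μ : Measure Ω} [IsFiniteMeasure μ] {f : Ω → ℝ}
    (hf : Measurable f) (h01 : ∀ x, f x = 0 ∨ f x = 1) : Integrable f μ :=
  .of_bound hf.aestronglyMeasurable 1 <| ae_of_all _ fun x => by
    rcases h01 x with h | h <;> simp [h]

lemma integral_one_sub {μ : Measure Ω} [IsProbabilityMeasure μ] {f : Ω → ℝ}
    (hf : Integrable f μ) : ∫ x, (1 - f x) ∂μ = 1 - ∫ x, f x ∂μ := by
  simp [integral_sub (integrable_const 1) hf]

lemma integral_le_one_of_le_one {μ : Measure Ω} [IsProbabilityMeasure μ] {f : Ω → ℝ}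
    (hf : ∀ x, f x ≤ 1) : ∫ x, f x ∂μ ≤ 1 := by
  by_cases hi : Integrable f μ
  · simpa using integral_mono hi (integrable_const 1) hf
  · simp [integral_undef hi]

lemma exists_eq_or_eq_one_sub_integral_eq_abs {μ ν : Measure Ω}
    [IsProbabilityMeasure μ] [IsProbabilityMeasure ν] {g : Ω → ℝ}
    (hμ : Integrable g μ) (hν : Integrable g ν) :
    ∃ u : Ω → ℝ, (u = g ∨ u = fun x => 1 - g x) ∧
      (∫ x, (1 - u x) ∂μ) + (∫ x, u x ∂ν) - 1 = |(∫ x, g x ∂μ) - ∫ x, g x ∂ν| := by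
  rcases le_total (∫ x, g x ∂μ) (∫ x, g x ∂ν) with hle | hle
  · refine ⟨g, .inl rfl, ?_⟩
    rw [abs_of_nonpos (sub_nonpos.mpr hle), integral_one_sub hμ]
    ring
  · refine ⟨fun x => 1 - g x, .inr rfl, ?_⟩
    simp only [sub_sub_cancel]
    rw [abs_of_nonneg (sub_nonneg.mpr hle), integral_one_sub hν]
    ring

lemma measurable_and_eq_zero_or_one_of_eq_or_eq_one_sub {g u : Ω → ℝ} (hg : Measurable g)
    (hg01 : ∀ x, g x = 0 ∨ g x = 1) (hu : u = g ∨ u = fun x => 1 - g x) :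
    Measurable u ∧ ∀ x, u x = 0 ∨ u x = 1 := by
  rcases hu with rfl | rfl
  · exact ⟨hg, hg01⟩
  · refine ⟨measurable_const.sub hg, fun x => ?_⟩
    rcases hg01 x with h | h <;> simp [h]

lemma eoObjective_le_two (Z00 Z10 Z01 Z11 : Measure Ω)
    [IsProbabilityMeasure Z00] [IsProbabilityMeasure Z10]
    [IsProbabilityMeasure Z01] [IsProbabilityMeasure Z11] {h : Ω → Bool → ℝ}
    (h0 : ∀ x b, 0 ≤ h x b) (h1 : ∀ x b, h x b ≤ 1) :
    eoObjective Z00 Z10 Z01 Z11 h ≤ 2 := by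
  have h1' : ∀ b x, 1 - h x b ≤ 1 := fun b x => sub_le_self 1 (h0 x b)
  have := integral_le_one_of_le_one (μ := Z00) (h1' false)
  have := integral_le_one_of_le_one (μ := Z10) (h1 · false)
  have := integral_le_one_of_le_one (μ := Z01) (h1' true)
  have := integral_le_one_of_le_one (μ := Z11) (h1 · true)
  unfold eoObjective
  linarith
end

/-- LAFTR equalized-odds bound: for any binary classifier `g`, there is an adversary
`h : Ω × {0,1} → {0,1}` built piecewise from `g` and `1 - g` according to the second
argument with `L_EO(h) = Δ_EO(g)`; hence `Δ_EO(g)` is bounded above by the optimal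
adversarial objective value. -/
theorem laftr_equalized_odds_bound
    {Ω : Type*} [MeasurableSpace Ω]
    (Z00 Z10 Z01 Z11 : Measure Ω)
    [IsProbabilityMeasure Z00] [IsProbabilityMeasure Z10]
    [IsProbabilityMeasure Z01] [IsProbabilityMeasure Z11]
    (g : Ω → ℝ) (hg : Measurable g) (hg01 : ∀ x, g x = 0 ∨ g x = 1) :
    (∃ h : Ω → Bool → ℝ,
      (∀ b, Measurable fun x => h x b) ∧ (∀ x b, h x b = 0 ∨ h x b = 1) ∧
      (∀ b, (fun x => h x b) = g ∨ (fun x => h x b) = fun x => 1 - g x) ∧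
      (∫ x, (1 - h x false) ∂Z00) + (∫ x, h x false ∂Z10) +
        (∫ x, (1 - h x true) ∂Z01) + (∫ x, h x true ∂Z11) - 2
        = |(∫ x, g x ∂Z00) - ∫ x, g x ∂Z10| +
          |(∫ x, (1 - g x) ∂Z01) - ∫ x, (1 - g x) ∂Z11|) ∧
    |(∫ x, g x ∂Z00) - ∫ x, g x ∂Z10| +
      |(∫ x, (1 - g x) ∂Z01) - ∫ x, (1 - g x) ∂Z11| ≤
      sSup {L : ℝ | ∃ h : Ω → Bool → ℝ,
        (∀ b, Measurable fun x => h x b) ∧ (∀ x b, h x b = 0 ∨ h x b = 1) ∧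
        L = (∫ x, (1 - h x false) ∂Z00) + (∫ x, h x false ∂Z10) +
            (∫ x, (1 - h x true) ∂Z01) + (∫ x, h x true ∂Z11) - 2} := by
  have hint : ∀ (μ : Measure Ω) [IsProbabilityMeasure μ], Integrable g μ :=
    fun μ _ => integrable_of_forall_eq_zero_or_one hg hg01
  obtain ⟨u₀, hu₀, hL₀⟩ := exists_eq_or_eq_one_sub_integral_eq_abs (hint Z00) (hint Z10)
  obtain ⟨u₁, hu₁, hL₁⟩ := exists_eq_or_eq_one_sub_integral_eq_abs (hint Z01) (hint Z11)
  set h : Ω → Bool → ℝ := fun x b => bif b then u₁ x else u₀ x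
  have hpiece : ∀ b, (fun x => h x b) = g ∨ (fun x => h x b) = fun x => 1 - g x :=
    fun b => b.casesOn hu₀ hu₁
  have hadm : ∀ b, Measurable (fun x => h x b) ∧ ∀ x, h x b = 0 ∨ h x b = 1 :=
    fun b => measurable_and_eq_zero_or_one_of_eq_or_eq_one_sub hg hg01 (hpiece b)
  have hL : eoObjective Z00 Z10 Z01 Z11 h = |(∫ x, g x ∂Z00) - ∫ x, g x ∂Z10| +
      |(∫ x, (1 - g x) ∂Z01) - ∫ x, (1 - g x) ∂Z11| := by
    rw [integral_one_sub (hint Z01), integral_one_sub (hint Z11), sub_sub_sub_cancel_left,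
      abs_sub_comm (∫ x, g x ∂Z11), ← hL₀, ← hL₁]
    simp only [eoObjective, h, cond_true, cond_false]
    ring
  refine ⟨⟨h, fun b => (hadm b).1, fun x b => (hadm b).2 x, hpiece, hL⟩, le_csSup ⟨2, ?_⟩
    ⟨h, fun b => (hadm b).1, fun x b => (hadm b).2 x, hL.symm⟩⟩
  rintro L ⟨h', -, h01', rfl⟩
  exact eoObjective_le_two Z00 Z10 Z01 Z11
    (fun x b => by rcases h01' x b with hx | hx <;> simp [hx])
    (fun x b => by rcases h01' x b with hx | hx <;> simp [hx])
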